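/- arXiv:1104.2113 — 5 statements merged into one kernel-verified Lean document; each statement's English description precedes it below -/
import Mathlib

section
/- The XXZ R-matrix satisfies the Yang–Baxter equation R_{ab}(u,v) R_{ac}(u,w) R_{bc}(v,w) = R_{bc}(v,w) R_{ac}(u,w) R_{ab}(u,v) on C^2 ⊗ C^2 ⊗ C^2, for all complex u, v, w. -/
open Matrix

/-- The XXZ R-matrix on `ℂ² ⊗ ℂ²`. -/
noncomputable def Rxxz (γ u v : ℂ) : Matrix (Fin 2 × Fin 2) (Fin 2 × Fin 2) ℂ :=
  fun p q =>
    if p = q then (if p.1 = p.2 then Complex.sinh (u - v + γ) else Complex.sinh (u - v))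
    else if p.1 ≠ p.2 ∧ q.1 ≠ q.2 then Complex.sinh γ
    else 0

/-- Action on factors a,b of `ℂ² ⊗ ℂ² ⊗ ℂ²`. -/
def embAB (M : Matrix (Fin 2 × Fin 2) (Fin 2 × Fin 2) ℂ) :
    Matrix (Fin 2 × Fin 2 × Fin 2) (Fin 2 × Fin 2 × Fin 2) ℂ :=
  fun p q => if p.2.2 = q.2.2 then M (p.1, p.2.1) (q.1, q.2.1) else 0

/-- Action on factors a,c of `ℂ² ⊗ ℂ² ⊗ ℂ²`. -/
def embAC (M : Matrix (Fin 2 × Fin 2) (Fin 2 × Fin 2) ℂ) :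
    Matrix (Fin 2 × Fin 2 × Fin 2) (Fin 2 × Fin 2 × Fin 2) ℂ :=
  fun p q => if p.2.1 = q.2.1 then M (p.1, p.2.2) (q.1, q.2.2) else 0

/-- Action on factors b,c of `ℂ² ⊗ ℂ² ⊗ ℂ²`. -/
def embBC (M : Matrix (Fin 2 × Fin 2) (Fin 2 × Fin 2) ℂ) :
    Matrix (Fin 2 × Fin 2 × Fin 2) (Fin 2 × Fin 2 × Fin 2) ℂ :=
  fun p q => if p.1 = q.1 then M (p.2.1, p.2.2) (q.2.1, q.2.2) else 0

private lemma K1 (γ a b x y c : ℂ) (hx : x = a + γ) (hy : y = b + γ) (hc : c = b - a) :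
    Complex.sinh x * Complex.sinh b =
      Complex.sinh a * Complex.sinh y + Complex.sinh γ * Complex.sinh c := by
  subst hx hy hc
  simp only [Complex.sinh_add, Complex.sinh_sub, Complex.cosh_add, Complex.cosh_sub]
  ring

private lemma K2 (γ a b x y z : ℂ) (hx : x = a + γ) (hy : y = b + γ) (hz : z = a + b + γ) :
    Complex.sinh x * Complex.sinh y =
      Complex.sinh a * Complex.sinh b + Complex.sinh γ * Complex.sinh z := by
  subst hx hy hz
  simp only [Complex.sinh_add, Complex.cosh_add]
  linear_combination Complex.sinh a * Complex.sinh b * Complex.cosh_sq γ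

set_option maxHeartbeats 4000000 in
/-- The Yang–Baxter equation for the XXZ R-matrix. -/
theorem yang_baxter_xxz (γ u v w : ℂ) :
    embAB (Rxxz γ u v) * embAC (Rxxz γ u w) * embBC (Rxxz γ v w) =
      embBC (Rxxz γ v w) * embAC (Rxxz γ u w) * embAB (Rxxz γ u v) := by
  ext ⟨a, b, c⟩ ⟨d, e, f⟩
  simp only [Matrix.mul_apply, Fintype.sum_prod_type, Fin.sum_univ_two,
    embAB, embAC, embBC, Rxxz]
  fin_cases a <;> fin_cases b <;> fin_cases c <;> fin_cases d <;> fin_cases e <;> fin_cases f <;>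
    simp [Prod.ext_iff] <;>
    first
    | ring1
    | linear_combination Complex.sinh γ * K1 γ (u-v) (u-w) (u-v+γ) (u+(γ-w)) (v-w) (by ring) (by ring) (by ring)
    | linear_combination (-Complex.sinh γ) * K1 γ (u-v) (u-w) (u-v+γ) (u+(γ-w)) (v-w) (by ring) (by ring) (by ring)
    | linear_combination Complex.sinh γ * K2 γ (u-v) (v-w) (u-v+γ) (v+(γ-w)) (u+(γ-w)) (by ring) (by ring) (by ring)
    | linear_combination (-Complex.sinh γ) * K2 γ (u-v) (v-w) (u-v+γ) (v+(γ-w)) (u+(γ-w)) (by ring) (by ring) (by ring)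
    | linear_combination Complex.sinh γ * K1 γ (-v+u) (-w+u) (-v+u+γ) (-w+u+γ) (v-w) (by ring) (by ring) (by ring)
    | linear_combination (-Complex.sinh γ) * K1 γ (-v+u) (-w+u) (-v+u+γ) (-w+u+γ) (v-w) (by ring) (by ring) (by ring)
    | linear_combination Complex.sinh γ * K1 γ (-w+v) (u-w) (-w+v+γ) (u-w+γ) (u-v) (by ring) (by ring) (by ring)
    | linear_combination (-Complex.sinh γ) * K1 γ (-w+v) (u-w) (-w+v+γ) (u-w+γ) (u-v) (by ring) (by ring) (by ring)
    | linear_combination Complex.sinh γ * K1 γ (-w+v) (u-w) (-w+γ+v) (u-w+γ) (u-v) (by ring) (by ring) (by ring)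
    | linear_combination (-Complex.sinh γ) * K1 γ (-w+v) (u-w) (-w+γ+v) (u-w+γ) (u-v) (by ring) (by ring) (by ring)
    | linear_combination Complex.sinh γ * K2 γ (-w+v) (u-v) (-w+γ+v) (u+(γ-v)) (u-w+γ) (by ring) (by ring) (by ring)
    | linear_combination (-Complex.sinh γ) * K2 γ (-w+v) (u-v) (-w+γ+v) (u+(γ-v)) (u-w+γ) (by ring) (by ring) (by ring)
    | linear_combination Complex.sinh γ * K2 γ (u-v) (v-w) (u-v+γ) (v-w+γ) (u-w+γ) (by ring) (by ring) (by ring)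
    | linear_combination (-Complex.sinh γ) * K2 γ (u-v) (v-w) (u-v+γ) (v-w+γ) (u-w+γ) (by ring) (by ring) (by ring)
    | linear_combination Complex.sinh γ * K1 γ (v-w) (u-w) (v-w+γ) (u-w+γ) (u-v) (by ring) (by ring) (by ring)
    | linear_combination (-Complex.sinh γ) * K1 γ (v-w) (u-w) (v-w+γ) (u-w+γ) (u-v) (by ring) (by ring) (by ring)
    | linear_combination Complex.sinh γ * K1 γ (u-v) (u-w) (u-v+γ) (u-w+γ) (v-w) (by ring) (by ring) (by ring)
    | linear_combination (-Complex.sinh γ) * K1 γ (u-v) (u-w) (u-v+γ) (u-w+γ) (v-w) (by ring) (by ring) (by ring)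
end

section
/- The Izergin function satisfies the Korepin recursion: specializing v_N = w_N - γ gives Z̆_N = [γ] · ∏_{i=1}^{N-1} [v_i-w_N][w_N-w_i-γ] · Z̆_{N-1}, where Z̆_{N-1} is the same function in the variables v_1,…,v_{N-1}, w_1,…,w_{N-1}. -/
/-!
At `v_N = w_N - γ` the factor `[v_N - w_N + γ]` vanishes, so it kills every entry of the last
column of the Izergin matrix except the corner one, and the determinant expands along that
column. The corner entry carries `[v_i - v_N][v_i - w_N]` and, after pulling the factor
`[w_N - w_j][w_N - w_j - γ]` out of each column `j`, the minor is the Izergin matrix of size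
`N - 1`. The factors `[v_i - v_N]` and `[w_N - w_j]` are the last-index factors of the two
denominators and cancel.
-/

open Finset

/-- The Izergin function, in the determinant form
`det([γ]∏_{k≠i}[v_k-w_j+γ][v_k-w_j]) / ∏_{i<j}[v_i-v_j][w_j-w_i]`. -/
noncomputable def izerginDet (γ : ℂ) {N : ℕ} (v w : Fin N → ℂ) : ℂ :=
  Matrix.det (Matrix.of fun i j : Fin N =>
      Complex.sinh γ *
        ∏ k ∈ Finset.univ.erase i, (Complex.sinh (v k - w j + γ) * Complex.sinh (v k - w j))) /
  ((∏ i, ∏ j ∈ Ioi i, Complex.sinh (v i - v j)) *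
   (∏ i, ∏ j ∈ Ioi i, Complex.sinh (w j - w i)))

section

variable {M : Type*} [CommMonoid M] {n : ℕ}

theorem Fin.prod_univ_erase_castSucc (f : Fin (n + 1) → M) (i : Fin n) :
    ∏ k ∈ univ.erase i.castSucc, f k =
      (∏ k ∈ univ.erase i, f k.castSucc) * f (Fin.last n) := by
  simp [← filter_ne', prod_filter, Fin.prod_univ_castSucc, Fin.castSucc_inj,
    (Fin.castSucc_lt_last i).ne']

theorem Fin.prod_univ_erase_last (f : Fin (n + 1) → M) :
    ∏ k ∈ univ.erase (Fin.last n), f k = ∏ k : Fin n, f k.castSucc := by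
  simp [← filter_ne', prod_filter, Fin.prod_univ_castSucc, (Fin.castSucc_lt_last _).ne]

theorem Fin.prod_Ioi_castSucc (f : Fin (n + 1) → M) (i : Fin n) :
    ∏ j ∈ Ioi i.castSucc, f j = (∏ j ∈ Ioi i, f j.castSucc) * f (Fin.last n) := by
  simp [← filter_lt_eq_Ioi, prod_filter, Fin.prod_univ_castSucc, Fin.castSucc_lt_last]

theorem Fin.prod_univ_prod_Ioi_castSucc (f : Fin (n + 1) → Fin (n + 1) → M) :
    ∏ i, ∏ j ∈ Ioi i, f i j =
      (∏ i : Fin n, f i.castSucc (Fin.last n)) *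
        ∏ i : Fin n, ∏ j ∈ Ioi i, f i.castSucc j.castSucc := by
  simp [Fin.prod_univ_castSucc, Fin.prod_Ioi_castSucc, prod_mul_distrib, mul_comm,
    Ioi_eq_empty.2 fun j _ => Fin.le_last j]

end

theorem Matrix.det_eq_mul_det_submatrix_castSucc_of_eq_zero {R : Type*} [CommRing R] {n : ℕ}
    (A : Matrix (Fin (n + 1)) (Fin (n + 1)) R)
    (h : ∀ i ≠ Fin.last n, A i (Fin.last n) = 0) :
    A.det = A (Fin.last n) (Fin.last n) * (A.submatrix Fin.castSucc Fin.castSucc).det := by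
  rw [Matrix.det_succ_column A (Fin.last n), sum_eq_single (Fin.last n)
    (fun i _ hi => by rw [h i hi, mul_zero, zero_mul]) (by simp)]
  simp [Fin.succAbove_last, ← two_mul, pow_mul]

open Complex

noncomputable def izerginMatrix (γ : ℂ) {N : ℕ} (v w : Fin N → ℂ) :
    Matrix (Fin N) (Fin N) ℂ :=
  Matrix.of fun i j => sinh γ * ∏ k ∈ univ.erase i, (sinh (v k - w j + γ) * sinh (v k - w j))

theorem izerginDet_eq (γ : ℂ) {N : ℕ} (v w : Fin N → ℂ) :
    izerginDet γ v w = (izerginMatrix γ v w).det /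
      ((∏ i, ∏ j ∈ Ioi i, sinh (v i - v j)) * ∏ i, ∏ j ∈ Ioi i, sinh (w j - w i)) :=
  rfl

section KorepinSpecialization

variable {γ : ℂ} {N : ℕ} {v w : Fin (N + 1) → ℂ}
  (hv : v (Fin.last N) = w (Fin.last N) - γ)
include hv

theorem izerginMatrix_apply_last_of_ne {i : Fin (N + 1)} (hi : i ≠ Fin.last N) :
    izerginMatrix γ v w i (Fin.last N) = 0 := by
  have hfactor : sinh (v (Fin.last N) - w (Fin.last N) + γ) = 0 := by
    rw [hv, sub_sub_cancel_left, neg_add_cancel, sinh_zero]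
  refine mul_eq_zero_of_right _ (prod_eq_zero (mem_erase.2 ⟨hi.symm, mem_univ _⟩) ?_)
  rw [hfactor, zero_mul]

theorem izerginMatrix_last_last :
    izerginMatrix γ v w (Fin.last N) (Fin.last N) =
      sinh γ * ∏ k : Fin N, (sinh (v k.castSucc - v (Fin.last N)) *
        sinh (v k.castSucc - w (Fin.last N))) := by
  simp only [izerginMatrix, Matrix.of_apply, Fin.prod_univ_erase_last, hv, sub_sub_eq_add_sub,
    add_sub_right_comm]

theorem izerginMatrix_submatrix_castSucc_apply (i j : Fin N) :
    (izerginMatrix γ v w).submatrix Fin.castSucc Fin.castSucc i j =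
      (sinh (w (Fin.last N) - w j.castSucc) * sinh (w (Fin.last N) - w j.castSucc - γ)) *
        izerginMatrix γ (v ∘ Fin.castSucc) (w ∘ Fin.castSucc) i j := by
  simp only [izerginMatrix, Matrix.submatrix_apply, Matrix.of_apply, Fin.prod_univ_erase_castSucc,
    Function.comp_apply, hv, sub_right_comm _ γ, sub_add_cancel]
  ring

theorem det_izerginMatrix_of_eq_sub :
    (izerginMatrix γ v w).det =
      (sinh γ * ∏ k : Fin N, (sinh (v k.castSucc - v (Fin.last N)) *
        sinh (v k.castSucc - w (Fin.last N)))) *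
      ((∏ j : Fin N, (sinh (w (Fin.last N) - w j.castSucc) *
        sinh (w (Fin.last N) - w j.castSucc - γ))) *
        (izerginMatrix γ (v ∘ Fin.castSucc) (w ∘ Fin.castSucc)).det) := by
  rw [Matrix.det_eq_mul_det_submatrix_castSucc_of_eq_zero _
      fun _ hi => izerginMatrix_apply_last_of_ne hv hi,
    izerginMatrix_last_last hv, ← Matrix.det_mul_row]
  congr 2
  ext i j
  exact izerginMatrix_submatrix_castSucc_apply hv i j

end KorepinSpecialization

theorem izergin_korepin_recursion_general (γ : ℂ) {N : ℕ} (v w : Fin (N + 1) → ℂ)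
    (hv : v (Fin.last N) = w (Fin.last N) - γ)
    (hvv : ∀ i j, i ≠ j → Complex.sinh (v i - v j) ≠ 0)
    (hww : ∀ i j, i ≠ j → Complex.sinh (w i - w j) ≠ 0) :
    izerginDet γ v w =
      Complex.sinh γ *
        (∏ i : Fin N, Complex.sinh (v i.castSucc - w (Fin.last N)) *
          Complex.sinh (w (Fin.last N) - w i.castSucc - γ)) *
        izerginDet γ (v ∘ Fin.castSucc) (w ∘ Fin.castSucc) := by
  have hPv : ∏ i : Fin N, sinh (v i.castSucc - v (Fin.last N)) ≠ 0 :=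
    prod_ne_zero_iff.2 fun i _ => hvv _ _ (Fin.castSucc_lt_last i).ne
  have hPw : ∏ i : Fin N, sinh (w (Fin.last N) - w i.castSucc) ≠ 0 :=
    prod_ne_zero_iff.2 fun i _ => hww _ _ (Fin.castSucc_lt_last i).ne'
  rw [izerginDet_eq, izerginDet_eq, det_izerginMatrix_of_eq_sub hv,
    Fin.prod_univ_prod_Ioi_castSucc fun i j => sinh (v i - v j),
    Fin.prod_univ_prod_Ioi_castSucc fun i j => sinh (w j - w i)]
  simp only [prod_mul_distrib, Function.comp_apply]
  field_simp

/-- The Korepin recursion for the Izergin function: specializing `v_N = w_N - γ`. -/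
theorem izergin_korepin_recursion (γ : ℂ) {N : ℕ} (hN : 1 ≤ N) (v w : Fin (N + 1) → ℂ)
    (hv : v (Fin.last N) = w (Fin.last N) - γ)
    (hvv : ∀ i j, i ≠ j → Complex.sinh (v i - v j) ≠ 0)
    (hww : ∀ i j, i ≠ j → Complex.sinh (w i - w j) ≠ 0) :
    izerginDet γ v w =
      Complex.sinh γ *
        (∏ i : Fin N, Complex.sinh (v i.castSucc - w (Fin.last N)) *
          Complex.sinh (w (Fin.last N) - w i.castSucc - γ)) *
        izerginDet γ (v ∘ Fin.castSucc) (w ∘ Fin.castSucc) :=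
  izergin_korepin_recursion_general γ v w hv hvv hww
end

section
/- Suppose functions Z̆_N(v_1,…,v_N; w_1,…,w_N), N ≥ 1, satisfy: (1) symmetry in w_1,…,w_N; (2) each Z̆_N is a trigonometric polynomial of degree at most N-1 in v_N (i.e. a linear combination of e^{kv_N} for |k| ≤ N-1 with k ≡ N-1 mod 2); (3) the recursion Z̆_N|_{v_N=w_N-γ} = [γ]∏_{i=1}^{N-1}[v_i-w_N][w_N-w_i-γ] · Z̆_{N-1}; and (4) Z̆_1 = [γ]. Then the Z̆_N are uniquely determined: any two families satisfying (1)–(4) coincide for all N, provided w_1-γ,…,w_N-γ are pairwise distinct values for the interpolation. -/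
/-!
Substituting `t = exp (2 v_N)` turns a trigonometric polynomial of degree `N - 1` in `v_N` into
`exp (-(N - 1) v_N)` times an ordinary polynomial of degree at most `N - 1` in `t`, so it is
determined by its values at the `N` nodes `v_N = w_j - γ`. By symmetry in `w`, the recursion
gives the value at every node, not just at `w_N - γ`, in terms of `Z_{N-1}`; by induction on `N`
the two families therefore agree at all nodes, hence everywhere.
-/

open Finset Polynomial

def IsTrigPoly (n : ℕ) (f : ℂ → ℂ) : Prop :=
  ∃ c : Fin (n + 1) → ℂ, ∀ x : ℂ,
    f x = ∑ k, c k * Complex.exp (((n : ℂ) - 2 * ((k : ℕ) : ℂ)) * x)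

/-- The polynomial `P` with `∑ c_k e^{(n - 2k) x} = e^{-n x} P(e^{2x})`. -/
noncomputable def trigPolyToPoly {n : ℕ} (c : Fin (n + 1) → ℂ) : ℂ[X] :=
  ∑ k, C (c k) * X ^ (n - (k : ℕ))

theorem natDegree_trigPolyToPoly_le {n : ℕ} (c : Fin (n + 1) → ℂ) :
    (trigPolyToPoly c).natDegree ≤ n :=
  natDegree_sum_le_of_forall_le _ _ fun _ _ =>
    (natDegree_C_mul_le _ _).trans (natDegree_X_pow_le _ |>.trans (Nat.sub_le _ _))

theorem trigSum_eq_exp_mul_eval {n : ℕ} (c : Fin (n + 1) → ℂ) (x : ℂ) :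
    ∑ k, c k * Complex.exp (((n : ℂ) - 2 * ((k : ℕ) : ℂ)) * x) =
      Complex.exp (-(n : ℂ) * x) * (trigPolyToPoly c).eval (Complex.exp (2 * x)) := by
  rw [trigPolyToPoly, eval_finsetSum, mul_sum]
  refine sum_congr rfl fun k _ => ?_
  have hk : (k : ℕ) ≤ n := Nat.lt_succ_iff.mp k.isLt
  rw [eval_mul, eval_C, eval_pow, eval_X, ← Complex.exp_nat_mul, mul_left_comm,
    ← Complex.exp_add, Nat.cast_sub hk]
  congr 2
  ring

theorem IsTrigPoly.eq_of_eq_at {n : ℕ} {f g : ℂ → ℂ}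
    (hf : IsTrigPoly n f) (hg : IsTrigPoly n g)
    (x : Fin (n + 1) → ℂ) (hx : Function.Injective fun j => Complex.exp (2 * x j))
    (heq : ∀ j, f (x j) = g (x j)) : f = g := by
  obtain ⟨c, hc⟩ := hf
  obtain ⟨d, hd⟩ := hg
  have hpoly : trigPolyToPoly c = trigPolyToPoly d := by
    refine eq_of_natDegree_lt_card_of_eval_eq _ _ hx (fun j => ?_) ?_
    · have := heq j
      rw [hc, hd, trigSum_eq_exp_mul_eval, trigSum_eq_exp_mul_eval] at this
      exact mul_left_cancel₀ (Complex.exp_ne_zero _) this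
    · simpa using max_le (natDegree_trigPolyToPoly_le c) (natDegree_trigPolyToPoly_le d)
  funext y
  rw [hc, hd, trigSum_eq_exp_mul_eval, trigSum_eq_exp_mul_eval, hpoly]

theorem eval_at_node_of_symm_of_recursion {γ : ℂ}
    {Z : (N : ℕ) → (Fin N → ℂ) → (Fin N → ℂ) → ℂ}
    (hsym : ∀ (N : ℕ) (v w : Fin N → ℂ) (σ : Equiv.Perm (Fin N)),
      Z N v (w ∘ σ) = Z N v w)
    (hrec : ∀ (N : ℕ) (v w : Fin (N + 1) → ℂ),
      Z (N + 1) (Function.update v (Fin.last N) (w (Fin.last N) - γ)) w =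
        Complex.sinh γ *
          (∏ i : Fin N, Complex.sinh (v i.castSucc - w (Fin.last N)) *
            Complex.sinh (w (Fin.last N) - w i.castSucc - γ)) *
          Z N (v ∘ Fin.castSucc) (w ∘ Fin.castSucc))
    (N : ℕ) (v w : Fin (N + 1) → ℂ) (j : Fin (N + 1)) :
    let w' := w ∘ Equiv.swap j (Fin.last N)
    Z (N + 1) (Function.update v (Fin.last N) (w j - γ)) w =
      Complex.sinh γ *
        (∏ i : Fin N, Complex.sinh (v i.castSucc - w j) *
          Complex.sinh (w j - w' i.castSucc - γ)) *
        Z N (v ∘ Fin.castSucc) (w' ∘ Fin.castSucc) := by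
  intro w'
  have hlast : w' (Fin.last N) = w j := by simp [w']
  rw [← hsym _ _ w (Equiv.swap j (Fin.last N)), ← hlast]
  exact hrec N v w'

theorem korepin_uniqueness_general (γ : ℂ)
    (Z Z' : (N : ℕ) → (Fin N → ℂ) → (Fin N → ℂ) → ℂ)
    -- condition 1: symmetry in the `w` variables
    (hsym : ∀ (N : ℕ) (v w : Fin N → ℂ) (σ : Equiv.Perm (Fin N)), Z N v (w ∘ σ) = Z N v w)
    (hsym' : ∀ (N : ℕ) (v w : Fin N → ℂ) (σ : Equiv.Perm (Fin N)), Z' N v (w ∘ σ) = Z' N v w)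
    -- condition 2: trigonometric polynomial of degree `N-1` in the last `v` variable,
    -- with exponents `k ≡ N-1 (mod 2)`, `|k| ≤ N-1`
    (hdeg : ∀ (N : ℕ) (v w : Fin (N + 1) → ℂ), ∃ c : Fin (N + 1) → ℂ, ∀ x : ℂ,
      Z (N + 1) (Function.update v (Fin.last N) x) w =
        ∑ k, c k * Complex.exp (((N : ℂ) - 2 * ((k : ℕ) : ℂ)) * x))
    (hdeg' : ∀ (N : ℕ) (v w : Fin (N + 1) → ℂ), ∃ c : Fin (N + 1) → ℂ, ∀ x : ℂ,
      Z' (N + 1) (Function.update v (Fin.last N) x) w =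
        ∑ k, c k * Complex.exp (((N : ℂ) - 2 * ((k : ℕ) : ℂ)) * x))
    -- condition 3: the Korepin recursion
    (hrec : ∀ (N : ℕ) (v w : Fin (N + 1) → ℂ),
      Z (N + 1) (Function.update v (Fin.last N) (w (Fin.last N) - γ)) w =
        Complex.sinh γ *
          (∏ i : Fin N, Complex.sinh (v i.castSucc - w (Fin.last N)) *
            Complex.sinh (w (Fin.last N) - w i.castSucc - γ)) *
          Z N (v ∘ Fin.castSucc) (w ∘ Fin.castSucc))
    (hrec' : ∀ (N : ℕ) (v w : Fin (N + 1) → ℂ),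
      Z' (N + 1) (Function.update v (Fin.last N) (w (Fin.last N) - γ)) w =
        Complex.sinh γ *
          (∏ i : Fin N, Complex.sinh (v i.castSucc - w (Fin.last N)) *
            Complex.sinh (w (Fin.last N) - w i.castSucc - γ)) *
          Z' N (v ∘ Fin.castSucc) (w ∘ Fin.castSucc))
    -- condition 4: the initial condition
    (hbase : ∀ v w : Fin 1 → ℂ, Z 1 v w = Complex.sinh γ)
    (hbase' : ∀ v w : Fin 1 → ℂ, Z' 1 v w = Complex.sinh γ) :
    ∀ (N : ℕ), 1 ≤ N → ∀ (v w : Fin N → ℂ),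
      (∀ i j, i ≠ j →
        Complex.exp (2 * (w i - γ)) ≠ Complex.exp (2 * (w j - γ))) →
      Z N v w = Z' N v w := by
  have key : ∀ (n : ℕ) (v w : Fin (n + 1) → ℂ),
      Function.Injective (fun i => Complex.exp (2 * (w i - γ))) →
        Z (n + 1) v w = Z' (n + 1) v w := by
    intro n
    induction n with
    | zero => intro v w _; rw [hbase, hbase']
    | succ n ih =>
      intro v w hw
      have hnode : ∀ j, Z (n + 2) (Function.update v (Fin.last _) (w j - γ)) w =
          Z' (n + 2) (Function.update v (Fin.last _) (w j - γ)) w := fun j => by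
        rw [eval_at_node_of_symm_of_recursion hsym hrec,
          eval_at_node_of_symm_of_recursion hsym' hrec', ih]
        exact hw.comp ((Equiv.injective _).comp (Fin.castSucc_injective _))
      have hslice := IsTrigPoly.eq_of_eq_at (hdeg (n + 1) v w) (hdeg' (n + 1) v w) _ hw hnode
      simpa using congrFun hslice (v (Fin.last _))
  intro N hN v w hw
  obtain ⟨n, rfl⟩ := Nat.exists_eq_add_of_le' hN
  exact key n v w fun i j h => not_imp_not.mp (hw i j) h

/-- Uniqueness of the domain wall partition function: any two families of functions
satisfying the four Korepin conditions (symmetry in `w`, trigonometric polynomiality of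
degree `N-1` in `v_N`, the recursion at `v_N = w_N - γ`, and the initial condition
`Z₁ = [γ]`) coincide for all `N ≥ 1`, provided the interpolation points `w_i - γ` are
pairwise distinct (mod `πi`). -/
theorem korepin_uniqueness (γ : ℂ) (hγ : Complex.sinh γ ≠ 0)
    (Z Z' : (N : ℕ) → (Fin N → ℂ) → (Fin N → ℂ) → ℂ)
    -- condition 1: symmetry in the `w` variables
    (hsym : ∀ (N : ℕ) (v w : Fin N → ℂ) (σ : Equiv.Perm (Fin N)), Z N v (w ∘ σ) = Z N v w)
    (hsym' : ∀ (N : ℕ) (v w : Fin N → ℂ) (σ : Equiv.Perm (Fin N)), Z' N v (w ∘ σ) = Z' N v w)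
    -- condition 2: trigonometric polynomial of degree `N-1` in the last `v` variable,
    -- with exponents `k ≡ N-1 (mod 2)`, `|k| ≤ N-1`
    (hdeg : ∀ (N : ℕ) (v w : Fin (N + 1) → ℂ), ∃ c : Fin (N + 1) → ℂ, ∀ x : ℂ,
      Z (N + 1) (Function.update v (Fin.last N) x) w =
        ∑ k, c k * Complex.exp (((N : ℂ) - 2 * ((k : ℕ) : ℂ)) * x))
    (hdeg' : ∀ (N : ℕ) (v w : Fin (N + 1) → ℂ), ∃ c : Fin (N + 1) → ℂ, ∀ x : ℂ,
      Z' (N + 1) (Function.update v (Fin.last N) x) w =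
        ∑ k, c k * Complex.exp (((N : ℂ) - 2 * ((k : ℕ) : ℂ)) * x))
    -- condition 3: the Korepin recursion
    (hrec : ∀ (N : ℕ) (v w : Fin (N + 1) → ℂ),
      Z (N + 1) (Function.update v (Fin.last N) (w (Fin.last N) - γ)) w =
        Complex.sinh γ *
          (∏ i : Fin N, Complex.sinh (v i.castSucc - w (Fin.last N)) *
            Complex.sinh (w (Fin.last N) - w i.castSucc - γ)) *
          Z N (v ∘ Fin.castSucc) (w ∘ Fin.castSucc))
    (hrec' : ∀ (N : ℕ) (v w : Fin (N + 1) → ℂ),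
      Z' (N + 1) (Function.update v (Fin.last N) (w (Fin.last N) - γ)) w =
        Complex.sinh γ *
          (∏ i : Fin N, Complex.sinh (v i.castSucc - w (Fin.last N)) *
            Complex.sinh (w (Fin.last N) - w i.castSucc - γ)) *
          Z' N (v ∘ Fin.castSucc) (w ∘ Fin.castSucc))
    -- condition 4: the initial condition
    (hbase : ∀ v w : Fin 1 → ℂ, Z 1 v w = Complex.sinh γ)
    (hbase' : ∀ v w : Fin 1 → ℂ, Z' 1 v w = Complex.sinh γ) :
    ∀ (N : ℕ), 1 ≤ N → ∀ (v w : Fin N → ℂ),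
      (∀ i j, i ≠ j →
        Complex.exp (2 * (w i - γ)) ≠ Complex.exp (2 * (w j - γ))) →
      Z N v w = Z' N v w :=
  korepin_uniqueness_general γ Z Z' hsym hsym' hdeg hdeg' hrec hrec' hbase hbase'
end

section
/- Uniqueness of the Felderhof partition function: if functions Z_N(v,q;w,r) satisfy (1) Z_N is a trigonometric polynomial of degree N-1 in v_N, (2) Z_N vanishes at v_N = v_j+q_j+q_N for all 1 ≤ j ≤ N-1, (3) the recursion Z_N|_{v_N=w_N+q_N+r_N} = [2q_N]^{1/2}[2r_N]^{1/2} ∏_{j=1}^{N-1}[w_N-w_j+r_j+r_N][v_j-w_N+q_j-r_N] · Z_{N-1}, and (4) Z_1 = [2q_1]^{1/2}[2r_1]^{1/2}, then Z_N = ∏_{j=1}^N [2q_j]^{1/2}[2r_j]^{1/2} · ∏_{1≤j<k≤N} [v_j-v_k+q_j+q_k][w_k-w_j+r_j+r_k]. -/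
open Finset Polynomial

lemma swap_Ioi_Iio {M α : Type*} [CommMonoid M] [Fintype α] [LinearOrder α]
    [LocallyFiniteOrderTop α] [LocallyFiniteOrderBot α] (f : α → α → M) :
    ∏ i, ∏ j ∈ Ioi i, f i j = ∏ j, ∏ i ∈ Iio j, f i j := by
  rw [prod_sigma', prod_sigma']
  refine prod_nbij' (fun p ↦ ⟨p.2, p.1⟩) (fun p ↦ ⟨p.2, p.1⟩) ?_ ?_ ?_ ?_ ?_ <;> simp

lemma split_last {M : Type*} [CommMonoid M] (n : ℕ) (F : Fin (n+1) → Fin (n+1) → M) :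
    ∏ j, ∏ k ∈ Ioi j, F j k =
      (∏ j : Fin n, ∏ k ∈ Ioi j, F j.castSucc k.castSucc) *
        ∏ j : Fin n, F j.castSucc (Fin.last n) := by
  rw [swap_Ioi_Iio, Fin.prod_univ_castSucc (f := fun k => ∏ j ∈ Iio k, F j k),
    Fin.Iio_last_eq_map, prod_map]
  congr 1
  rw [swap_Ioi_Iio]
  refine prod_congr rfl fun k _ => ?_
  rw [Fin.Iio_castSucc, prod_map]
  rfl

lemma aux_dvd {n : ℕ} (a : Fin n → ℂ) (ha : Function.Injective a) (P : Polynomial ℂ)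
    (h : ∀ j, P.eval (a j) = 0) :
    (∏ j, (X - Polynomial.C (a j))) ∣ P := by
  classical
  suffices H : ∀ s : Finset (Fin n), (∏ j ∈ s, (X - Polynomial.C (a j))) ∣ P from H univ
  intro s
  induction s using Finset.induction with
  | empty => simpa using one_dvd P
  | @insert j s' hj ih =>
    obtain ⟨Q, hQ⟩ := ih
    have h1 : Polynomial.eval (a j) (∏ i ∈ s', (X - Polynomial.C (a i))) ≠ 0 := by
      rw [Polynomial.eval_prod]
      refine prod_ne_zero_iff.2 fun i hi => ?_
      simp only [Polynomial.eval_sub, Polynomial.eval_X, Polynomial.eval_C, sub_ne_zero]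
      exact fun he => hj (by rw [ha he]; exact hi)
    have h2 : Q.eval (a j) = 0 := by
      have := h j
      rw [hQ, Polynomial.eval_mul] at this
      exact (mul_eq_zero.1 this).resolve_left h1
    obtain ⟨R, hR⟩ := (Polynomial.dvd_iff_isRoot).2 h2
    exact ⟨R, by rw [prod_insert hj, hQ, hR]; ring⟩

lemma sinh_factor (u w : ℂ) :
    Complex.sinh (u - w) =
      Complex.exp (-(u + w)) * (Complex.exp (2 * u) - Complex.exp (2 * w)) / 2 := by
  have h1 : Complex.exp (u - w) = Complex.exp (-(u+w)) * Complex.exp (2*u) := by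
    rw [← Complex.exp_add]; congr 1; ring
  have h2 : Complex.exp (-(u - w)) = Complex.exp (-(u+w)) * Complex.exp (2*w) := by
    rw [← Complex.exp_add]; congr 1; ring
  have h3 := Complex.two_sinh (u - w)
  rw [h1, h2] at h3
  linear_combination h3 / 2

lemma expPoly_factor (M : ℕ) (c : Fin (M+1) → ℂ) (xs : Fin M → ℂ)
    (hx : ∀ j k : Fin M, j ≠ k → Complex.exp (2 * xs j) ≠ Complex.exp (2 * xs k))
    (hz : ∀ j, ∑ k, c k * Complex.exp (((M:ℂ) - 2*((k:ℕ):ℂ)) * xs j) = 0) :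
    ∃ C : ℂ, ∀ z, ∑ k, c k * Complex.exp (((M:ℂ) - 2*((k:ℕ):ℂ)) * z) =
      C * ∏ j, Complex.sinh (z - xs j) := by
  classical
  set a : Fin M → ℂ := fun j => Complex.exp (2 * xs j) with ha_def
  have ha : Function.Injective a := fun j k h => by
    by_contra hne; exact hx j k hne h
  set P : Polynomial ℂ := ∑ k : Fin (M+1), Polynomial.C (c k) * X ^ (M - (k:ℕ)) with hP
  have hev : ∀ z : ℂ, ∑ k, c k * Complex.exp (((M:ℂ) - 2*((k:ℕ):ℂ)) * z) =
      Complex.exp (-(M:ℂ) * z) * P.eval (Complex.exp (2 * z)) := by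
    intro z
    rw [hP, Polynomial.eval_finset_sum, mul_sum]
    refine sum_congr rfl fun k _ => ?_
    rw [Polynomial.eval_mul, Polynomial.eval_C, Polynomial.eval_pow, Polynomial.eval_X,
      ← Complex.exp_nat_mul]
    rw [mul_comm (Complex.exp (-(M:ℂ) * z)), mul_assoc, ← Complex.exp_add]
    congr 2
    have hk : ((M - (k:ℕ) : ℕ) : ℂ) = (M:ℂ) - ((k:ℕ):ℂ) := by
      push_cast [Nat.cast_sub (Nat.lt_succ_iff.mp k.isLt)]; ring
    rw [hk]; ring
  have hroot : ∀ j, P.eval (a j) = 0 := by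
    intro j
    have := hz j
    rw [hev (xs j)] at this
    exact (mul_eq_zero.1 this).resolve_left (Complex.exp_ne_zero _)
  obtain ⟨Q, hQ⟩ := aux_dvd a ha P hroot
  have hmonic : (∏ j, (X - Polynomial.C (a j))).Monic :=
    monic_prod_of_monic _ _ fun j _ => monic_X_sub_C _
  have hdegProd : (∏ j : Fin M, (X - Polynomial.C (a j))).natDegree = M := by
    rw [Polynomial.natDegree_prod_of_monic _ _ fun j _ => monic_X_sub_C _]
    simp
  have hdegP : P.natDegree ≤ M := by
    rw [hP]
    refine (Polynomial.natDegree_sum_le _ _).trans ?_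
    simp only [Finset.fold_max_le]
    exact ⟨Nat.zero_le _, fun k _ =>
      (Polynomial.natDegree_C_mul_X_pow_le _ _).trans (Nat.sub_le _ _)⟩
  have hQdeg : Q.natDegree = 0 := by
    rcases eq_or_ne Q 0 with h0 | h0
    · simp [h0]
    · have := Polynomial.natDegree_mul (hmonic.ne_zero) h0
      rw [← hQ, hdegProd] at this
      omega
  obtain ⟨c0, hc0⟩ := Polynomial.natDegree_eq_zero.mp hQdeg
  refine ⟨c0 * ∏ j, (2 * Complex.exp (xs j)), fun z => ?_⟩
  rw [hev z, hQ, ← hc0, Polynomial.eval_mul, Polynomial.eval_prod, Polynomial.eval_C]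
  have hsinh : ∀ j, Complex.sinh (z - xs j) =
      Complex.exp (-(z + xs j)) * (Complex.exp (2 * z) - a j) / 2 := fun j => sinh_factor z (xs j)
  calc Complex.exp (-(M:ℂ) * z) *
        ((∏ j, Polynomial.eval (Complex.exp (2*z)) (X - Polynomial.C (a j))) * c0)
      = c0 * ∏ j : Fin M, (Complex.exp (-z) * (Complex.exp (2 * z) - a j)) := by
        simp only [Polynomial.eval_sub, Polynomial.eval_X, Polynomial.eval_C]
        rw [prod_mul_distrib, prod_const, card_univ, Fintype.card_fin,
          ← Complex.exp_nat_mul, show ((M:ℕ):ℂ) * -z = -(M:ℂ)*z from by ring]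
        ring
    _ = (c0 * ∏ j, (2 * Complex.exp (xs j))) * ∏ j, Complex.sinh (z - xs j) := by
        rw [mul_assoc, ← prod_mul_distrib]
        congr 1
        refine prod_congr rfl fun j _ => ?_
        have he : Complex.exp (-z) = Complex.exp (xs j) * Complex.exp (-(z + xs j)) := by
          rw [← Complex.exp_add]; congr 1; ring
        rw [hsinh j, he]
        ring


/-- Uniqueness of the Felderhof domain wall partition function: any family of
functions `Z_N` satisfying the four conditions (trigonometric polynomiality of degree
`N-1` in `v_N`, zeros at `v_N = v_j+q_j+q_N`, the recursion at `v_N = w_N+q_N+r_N`,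
and the initial condition) is given by the factorized formula, for generic
parameters. Here `s`, `t` are globally chosen square-root functions,
`s(x)² = t(x)² = [2x]`. -/
theorem felderhof_uniqueness
    (s t : ℂ → ℂ)
    (hs : ∀ x, (s x) ^ 2 = Complex.sinh (2 * x))
    (ht : ∀ x, (t x) ^ 2 = Complex.sinh (2 * x))
    (Z : (N : ℕ) → (Fin N → ℂ) → (Fin N → ℂ) → (Fin N → ℂ) → (Fin N → ℂ) → ℂ)
    -- condition 1: trig polynomial of degree `N-1` in the last rapidity `v_N`
    (hdeg : ∀ (N : ℕ) (v q w r : Fin (N + 1) → ℂ), ∃ c : Fin (N + 1) → ℂ, ∀ x : ℂ,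
      Z (N + 1) (Function.update v (Fin.last N) x) q w r =
        ∑ k, c k * Complex.exp (((N : ℂ) - 2 * ((k : ℕ) : ℂ)) * x))
    -- condition 2: zeros at `v_N = v_j + q_j + q_N`
    (hzero : ∀ (N : ℕ) (v q w r : Fin (N + 1) → ℂ) (j : Fin N),
      Z (N + 1)
        (Function.update v (Fin.last N) (v j.castSucc + q j.castSucc + q (Fin.last N)))
        q w r = 0)
    -- condition 3: the recursion at `v_N = w_N + q_N + r_N`
    (hrec : ∀ (N : ℕ) (v q w r : Fin (N + 1) → ℂ),
      Z (N + 1)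
        (Function.update v (Fin.last N)
          (w (Fin.last N) + q (Fin.last N) + r (Fin.last N))) q w r =
        s (q (Fin.last N)) * t (r (Fin.last N)) *
          (∏ j : Fin N,
            Complex.sinh (w (Fin.last N) - w j.castSucc + r j.castSucc + r (Fin.last N)) *
            Complex.sinh (v j.castSucc - w (Fin.last N) + q j.castSucc - r (Fin.last N))) *
          Z N (v ∘ Fin.castSucc) (q ∘ Fin.castSucc) (w ∘ Fin.castSucc) (r ∘ Fin.castSucc))
    -- condition 4: the initial condition
    (hbase : ∀ v q w r : Fin 1 → ℂ, Z 1 v q w r = s (q 0) * t (r 0)) :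
    ∀ (N : ℕ) (v q w r : Fin (N + 1) → ℂ),
      -- genericity: the zeros `v_j + q_j + q_N` are pairwise distinct mod `πi`
      (∀ j k : Fin (N + 1), j ≠ k →
        Complex.exp (2 * (v j + q j)) ≠ Complex.exp (2 * (v k + q k))) →
      (∀ j k : Fin (N + 1), Complex.sinh (v j - w k + q j - r k) ≠ 0) →
      Z (N + 1) v q w r =
        (∏ j, s (q j) * t (r j)) *
          ∏ j, ∏ k ∈ Ioi j,
            Complex.sinh (v j - v k + q j + q k) *
            Complex.sinh (w k - w j + r j + r k) := by
  
  intro N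
  induction N with
  | zero =>
    intro v q w r _ _
    have h0 : (Ioi (0 : Fin 1)) = (∅ : Finset (Fin 1)) := by decide
    simp [hbase, Fin.prod_univ_one, h0]
  | succ N ih =>
    intro v q w r hgen hsinh
    set lastI := Fin.last (N + 1) with hlastI
    obtain ⟨c, hc⟩ := hdeg (N + 1) v q w r
    -- the interpolation nodes
    have hxdist : ∀ j k : Fin (N + 1), j ≠ k →
        Complex.exp (2 * (v j.castSucc + q j.castSucc + q lastI)) ≠
        Complex.exp (2 * (v k.castSucc + q k.castSucc + q lastI)) := by
      intro j k hjk h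
      have hsplit : ∀ i : Fin (N + 1),
          Complex.exp (2 * (v i.castSucc + q i.castSucc + q lastI)) =
          Complex.exp (2 * (v i.castSucc + q i.castSucc)) * Complex.exp (2 * q lastI) := by
        intro i; rw [← Complex.exp_add]; congr 1; ring
      rw [hsplit j, hsplit k] at h
      exact hgen j.castSucc k.castSucc (fun hh => hjk (Fin.castSucc_injective _ hh))
        (mul_right_cancel₀ (Complex.exp_ne_zero _) h)
    have hzf : ∀ j : Fin (N + 1),
        ∑ k, c k * Complex.exp ((((N+1 : ℕ) : ℂ) - 2 * ((k : ℕ) : ℂ)) *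
          (v j.castSucc + q j.castSucc + q lastI)) = 0 := by
      intro j
      rw [← hc]
      exact hzero (N + 1) v q w r j
    obtain ⟨C, hC⟩ := expPoly_factor (N + 1) c
      (fun j => v j.castSucc + q j.castSucc + q lastI) hxdist hzf
    -- Z as the interpolated function, evaluated at v lastI
    have h1 : Z (N + 2) v q w r =
        C * ∏ j : Fin (N + 1), Complex.sinh (v lastI - (v j.castSucc + q j.castSucc + q lastI)) := by
      conv_lhs => rw [← Function.update_eq_self lastI v]
      rw [hc (v lastI), hC (v lastI)]
    -- evaluation at the recursion point
    have h2 : C * ∏ j : Fin (N + 1),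
          Complex.sinh (w lastI + q lastI + r lastI - (v j.castSucc + q j.castSucc + q lastI)) =
        s (q lastI) * t (r lastI) *
          (∏ j : Fin (N + 1),
            Complex.sinh (w lastI - w j.castSucc + r j.castSucc + r lastI) *
            Complex.sinh (v j.castSucc - w lastI + q j.castSucc - r lastI)) *
          Z (N + 1) (v ∘ Fin.castSucc) (q ∘ Fin.castSucc) (w ∘ Fin.castSucc) (r ∘ Fin.castSucc) := by
      rw [← hC (w lastI + q lastI + r lastI), ← hc (w lastI + q lastI + r lastI)]
      exact hrec (N + 1) v q w r
    -- induction hypothesis for the reduced system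
    have hih : Z (N + 1) (v ∘ Fin.castSucc) (q ∘ Fin.castSucc) (w ∘ Fin.castSucc) (r ∘ Fin.castSucc) =
        (∏ j : Fin (N + 1), s (q j.castSucc) * t (r j.castSucc)) *
          ∏ j : Fin (N + 1), ∏ k ∈ Ioi j,
            Complex.sinh (v j.castSucc - v k.castSucc + q j.castSucc + q k.castSucc) *
            Complex.sinh (w k.castSucc - w j.castSucc + r j.castSucc + r k.castSucc) := by
      rw [ih (v ∘ Fin.castSucc) (q ∘ Fin.castSucc) (w ∘ Fin.castSucc) (r ∘ Fin.castSucc)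
        (fun j k hjk => hgen j.castSucc k.castSucc (fun hh => hjk (Fin.castSucc_injective _ hh)))
        (fun j k => hsinh j.castSucc k.castSucc)]
      rfl
    -- rewrite the two sinh-products through sign flips
    have hflipA : ∀ j : Fin (N + 1),
        Complex.sinh (w lastI + q lastI + r lastI - (v j.castSucc + q j.castSucc + q lastI)) =
          -Complex.sinh (v j.castSucc - w lastI + q j.castSucc - r lastI) := by
      intro j
      rw [show w lastI + q lastI + r lastI - (v j.castSucc + q j.castSucc + q lastI) =
        -(v j.castSucc - w lastI + q j.castSucc - r lastI) from by ring, Complex.sinh_neg]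
    have hflipC : ∀ j : Fin (N + 1),
        Complex.sinh (v lastI - (v j.castSucc + q j.castSucc + q lastI)) =
          -Complex.sinh (v j.castSucc - v lastI + q j.castSucc + q lastI) := by
      intro j
      rw [show v lastI - (v j.castSucc + q j.castSucc + q lastI) =
        -(v j.castSucc - v lastI + q j.castSucc + q lastI) from by ring, Complex.sinh_neg]
    have hAne : ∀ j : Fin (N + 1),
        Complex.sinh (w lastI + q lastI + r lastI - (v j.castSucc + q j.castSucc + q lastI)) ≠ 0 := by
      intro j
      rw [hflipA j, neg_ne_zero]
      exact hsinh j.castSucc lastI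
    have hprodne : (∏ j : Fin (N + 1),
        Complex.sinh (w lastI + q lastI + r lastI - (v j.castSucc + q j.castSucc + q lastI))) ≠ 0 :=
      prod_ne_zero_iff.2 fun j _ => hAne j
    apply mul_right_cancel₀ hprodne
    rw [h1, show
      (C * ∏ j : Fin (N + 1), Complex.sinh (v lastI - (v j.castSucc + q j.castSucc + q lastI))) *
        ∏ j : Fin (N + 1),
          Complex.sinh (w lastI + q lastI + r lastI - (v j.castSucc + q j.castSucc + q lastI)) =
      (C * ∏ j : Fin (N + 1),
          Complex.sinh (w lastI + q lastI + r lastI - (v j.castSucc + q j.castSucc + q lastI))) *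
        ∏ j : Fin (N + 1), Complex.sinh (v lastI - (v j.castSucc + q j.castSucc + q lastI))
      from by ring, h2, hih]
    -- split the target products over the last index
    rw [split_last (N + 1) (fun j k =>
      Complex.sinh (v j - v k + q j + q k) * Complex.sinh (w k - w j + r j + r k))]
    rw [Fin.prod_univ_castSucc (f := fun j => s (q j) * t (r j))]
    -- flip signs in the remaining products
    rw [prod_congr rfl fun j _ => hflipA j, prod_congr rfl fun j _ => hflipC j]
    have hcomb :
        (∏ j : Fin (N + 1),
            Complex.sinh (w lastI - w j.castSucc + r j.castSucc + r lastI) *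
            Complex.sinh (v j.castSucc - w lastI + q j.castSucc - r lastI)) *
          ∏ j : Fin (N + 1), -Complex.sinh (v j.castSucc - v lastI + q j.castSucc + q lastI) =
        (∏ j : Fin (N + 1),
            Complex.sinh (v j.castSucc - v lastI + q j.castSucc + q lastI) *
            Complex.sinh (w lastI - w j.castSucc + r j.castSucc + r lastI)) *
          ∏ j : Fin (N + 1), -Complex.sinh (v j.castSucc - w lastI + q j.castSucc - r lastI) := by
      rw [← prod_mul_distrib, ← prod_mul_distrib]
      exact prod_congr rfl fun j _ => by ring
    linear_combination (s (q lastI) * t (r lastI) *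
      (∏ j : Fin (N + 1), s (q j.castSucc) * t (r j.castSucc)) *
      ∏ j : Fin (N + 1), ∏ k ∈ Ioi j,
        Complex.sinh (v j.castSucc - v k.castSucc + q j.castSucc + q k.castSucc) *
        Complex.sinh (w k.castSucc - w j.castSucc + r j.castSucc + r k.castSucc)) * hcomb
end

section
/- The factorized Felderhof scalar product satisfies the claimed recursion: let S_n(u,p;v,q;w,r) be the product formula S_n = ∏_{j=1}^n [2p_j]^{1/2} ∏_{j=1}^N [2q_j]^{1/2} ∏_{j=1}^{Ñ} [2r_j]^{1/2} · ∏_{j<k≤n}[u_k-u_j+p_j+p_k] ∏_{j<k≤N}[v_j-v_k+q_j+q_k] ∏_{j<k≤Ñ}[w_k-w_j+r_j+r_k] · ∏_{j=1}^n ∏_{k=1}^{Ñ}[w_k-u_j+p_j+r_k] · ∏_{j=1}^N ∏_{k=Ñ+1}^M [v_j-w_k+q_j-r_k] · ∏_{j=1}^n ∏_{k=1}^N [u_j+p_j-v_k-q_k]^{-1} · ∏_{j=1}^n ( (−1)^N ∏_{k=1}^M [u_j+p_j-w_k+r_k] + ∏_{k=1}^M [u_j+p_j-w_k-r_k] ),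 with Ñ = N−n. Then setting u_n + p_n = w_{Ñ+1} + r_{Ñ+1} yields S_n = [2p_n]^{1/2}[2r_{Ñ+1}]^{1/2} · ∏_{1≤j<Ñ+1}[w_j-w_{Ñ+1}+r_j-r_{Ñ+1}+2p_n] · ∏_{Ñ+1<j≤M}[w_{Ñ+1}-w_j+r_j+r_{Ñ+1}] · S_{n-1}, where S_{n-1} is the same formula with n replaced by n−1 (and Ñ by Ñ+1). -/
/-!
At `u_n + p_n = w_{Ñ+1} + r_{Ñ+1}` the second product in the `n`-th Bethe factor contains
`[0] = 0`, while the first contains `[2 r_{Ñ+1}] = sr_{Ñ+1}^2`; the remaining factors of the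
first product are `∏_{k ≠ Ñ+1} [w_{Ñ+1} - w_k + r_k + r_{Ñ+1}]`. The new vertical factor
`∏_j [v_j - w_{Ñ+1} + q_j - r_{Ñ+1}] = (-1)^N ∏_j [u_n + p_n - v_j - q_j]` cancels the `n`-th row
of denominators together with the sign of the Bethe factor, and the rows and columns that
`S_n` and `S_{n-1}` do not share match up after substituting `u_n + p_n`.

To let `S_n` and `S_{n-1}` read the same data, all families except `v, q, sq` are taken to be
restrictions of sequences on `ℕ`; then passing from `Ñ` to `Ñ + 1` only peels off the last
factor of products over `range`.
-/

open Finset Complex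

/-- The factorized expression for the intermediate Bethe scalar product `S_n` of the
trigonometric Felderhof model. Here `sp`, `sq`, `sr` are the chosen square roots
`[2p_j]^{1/2}`, `[2q_j]^{1/2}`, `[2r_j]^{1/2}`, and `Ñ = N - n`. -/
noncomputable def SFel {n N M : ℕ} (u p : Fin n → ℂ) (v q : Fin N → ℂ)
    (w r : Fin M → ℂ) (sp : Fin n → ℂ) (sq : Fin N → ℂ) (sr : Fin M → ℂ)
    (hn : n ≤ N) (hNM : N ≤ M) : ℂ :=
  (∏ j, sp j) * (∏ j, sq j) *
  (∏ j : Fin (N - n), sr ⟨j, by have := j.isLt; omega⟩) *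
  (∏ j : Fin n, ∏ k ∈ Ioi j, Complex.sinh (u k - u j + p j + p k)) *
  (∏ j : Fin N, ∏ k ∈ Ioi j, Complex.sinh (v j - v k + q j + q k)) *
  (∏ j : Fin (N - n), ∏ k ∈ Ioi j,
    Complex.sinh (w ⟨k, by have := k.isLt; omega⟩ - w ⟨j, by have := j.isLt; omega⟩ +
      r ⟨j, by have := j.isLt; omega⟩ + r ⟨k, by have := k.isLt; omega⟩)) *
  (∏ j : Fin n, ∏ k : Fin (N - n),
    Complex.sinh (w ⟨k, by have := k.isLt; omega⟩ - u j + p j +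
      r ⟨k, by have := k.isLt; omega⟩)) *
  (∏ j : Fin N, ∏ k ∈ Finset.univ.filter (fun k : Fin M => N - n ≤ (k : ℕ)),
    Complex.sinh (v j - w k + q j - r k)) *
  (∏ j : Fin n, ∏ k : Fin N, (Complex.sinh (u j + p j - v k - q k))⁻¹) *
  (∏ j : Fin n,
    ((-1 : ℂ) ^ N * (∏ k, Complex.sinh (u j + p j - w k + r k)) +
      ∏ k, Complex.sinh (u j + p j - w k - r k)))

section Products

variable {β : Type*} [CommMonoid β]

theorem prod_Ioo_val_eq_prod_Ioi {n : ℕ} (j : Fin n) (f : ℕ → β) :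
    ∏ k ∈ Ioo (j : ℕ) n, f k = ∏ k ∈ Ioi j, f k := by
  rw [← Fin.map_valEmbedding_Ioi, prod_map]
  rfl

theorem prod_univ_filter_val {M : ℕ} {p : ℕ → Prop} [DecidablePred p] {s : Finset ℕ}
    (hs : ∀ k, k ∈ s ↔ k < M ∧ p k) (f : ℕ → β) :
    ∏ k ∈ univ.filter (fun k : Fin M => p k), f k = ∏ k ∈ s, f k := by
  rw [show s = (range M).filter p by ext k; simp [hs], prod_filter, prod_filter]
  exact Fin.prod_univ_eq_prod_range (fun k => if p k then f k else 1) M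

theorem prod_range_succ_prod_Ioo (g : ℕ → ℕ → β) (t : ℕ) :
    ∏ j ∈ range (t + 1), ∏ k ∈ Ioo j (t + 1), g j k =
      (∏ j ∈ range t, ∏ k ∈ Ioo j t, g j k) * ∏ j ∈ range t, g j t := by
  rw [prod_range_succ, Ioo_add_one_right_eq_Ioc, Ioc_self, prod_empty, mul_one,
    ← prod_mul_distrib]
  refine prod_congr rfl fun j hj => ?_
  rw [Ioo_add_one_right_eq_Ioc, ← Ioo_insert_right (mem_range.1 hj),
    prod_insert right_notMem_Ioo, mul_comm]

end Products

/-- `SFel` for `u, p, sp, w, r, sr` given as sequences on `ℕ`, with `T` in place of `Ñ`. -/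
noncomputable def sFelNat (n T M : ℕ) {N : ℕ} (U P SP : ℕ → ℂ) (v q sq : Fin N → ℂ)
    (W R SR : ℕ → ℂ) : ℂ :=
  (∏ j ∈ range n, SP j) * (∏ j, sq j) * (∏ j ∈ range T, SR j) *
  (∏ j ∈ range n, ∏ k ∈ Ioo j n, sinh (U k - U j + P j + P k)) *
  (∏ j : Fin N, ∏ k ∈ Ioi j, sinh (v j - v k + q j + q k)) *
  (∏ j ∈ range T, ∏ k ∈ Ioo j T, sinh (W k - W j + R j + R k)) *
  (∏ j ∈ range n, ∏ k ∈ range T, sinh (W k - U j + P j + R k)) *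
  (∏ j : Fin N, ∏ k ∈ Ico T M, sinh (v j - W k + q j - R k)) *
  (∏ j ∈ range n, ∏ k : Fin N, (sinh (U j + P j - v k - q k))⁻¹) *
  (∏ j ∈ range n,
    ((-1 : ℂ) ^ N * (∏ k ∈ range M, sinh (U j + P j - W k + R k)) +
      ∏ k ∈ range M, sinh (U j + P j - W k - R k)))

theorem SFel_eq_sFelNat {n N M : ℕ} (U P SP : ℕ → ℂ) (v q sq : Fin N → ℂ) (W R SR : ℕ → ℂ)
    (hn : n ≤ N) (hNM : N ≤ M) :
    SFel (U ∘ Fin.val) (P ∘ Fin.val) v q (W ∘ Fin.val) (R ∘ Fin.val) (SP ∘ Fin.val) sq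
        (SR ∘ Fin.val) hn hNM =
      sFelNat n (N - n) M U P SP v q sq W R SR := by
  simp only [SFel, sFelNat, prod_range, Function.comp_apply, prod_Ioo_val_eq_prod_Ioi,
    ← prod_univ_filter_val (M := M) (p := (N - n ≤ ·)) (s := Ico (N - n) M) fun k => by
      simp only [mem_Ico]; omega]

theorem neg_one_pow_mul_prod_sinh_mul_prod_inv {N : ℕ} (v q : Fin N → ℂ) {x y z : ℂ}
    (hx : x = y + z) (hne : ∀ k, sinh (x - v k - q k) ≠ 0) :
    (-1) ^ N * (∏ j, sinh (v j - y + q j - z)) * ∏ j, (sinh (x - v j - q j))⁻¹ = 1 := by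
  have hneg : ∀ j, sinh (v j - y + q j - z) = -sinh (x - v j - q j) := fun j => by
    rw [← sinh_neg, hx]
    ring_nf
  rw [show (-1 : ℂ) ^ N = ∏ _j : Fin N, (-1 : ℂ) by simp, ← prod_mul_distrib,
    ← prod_mul_distrib]
  refine prod_eq_one fun j _ => ?_
  rw [hneg, neg_one_mul, neg_neg, mul_inv_cancel₀ (hne j)]

theorem prod_range_sinh_split {T M : ℕ} (hTM : T < M) (W R : ℕ → ℂ) :
    ∏ k ∈ range M, sinh (W T + R T - W k + R k) =
      sinh (2 * R T) * (∏ k ∈ range T, sinh (W T - W k + R k + R T)) *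
        ∏ k ∈ Ico (T + 1) M, sinh (W T - W k + R k + R T) := by
  have hsummand : ∀ k, W T + R T - W k + R k = W T - W k + R k + R T := fun k => by ring
  rw [← prod_range_mul_prod_Ico _ hTM.le, prod_eq_prod_Ico_succ_bot hTM,
    show W T + R T - W T + R T = 2 * R T by ring]
  simp only [hsummand]
  ring

theorem sFelNat_succ {m T M N : ℕ} (hTM : T < M) (U P SP : ℕ → ℂ) (v q sq : Fin N → ℂ)
    (W R SR : ℕ → ℂ) (hSR : SR T ^ 2 = sinh (2 * R T))
    (hden : ∀ k, sinh (U m + P m - v k - q k) ≠ 0) (hu : U m + P m = W T + R T) :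
    sFelNat (m + 1) T M U P SP v q sq W R SR =
      SP m * SR T * (∏ k ∈ range T, sinh (W k - W T + R k - R T + 2 * P m)) *
        (∏ k ∈ Ico (T + 1) M, sinh (W T - W k + R k + R T)) *
        sFelNat m (T + 1) M U P SP v q sq W R SR := by
  have hrow : ∏ k ∈ range T, sinh (W k - U m + P m + R k) =
      ∏ k ∈ range T, sinh (W k - W T + R k - R T + 2 * P m) :=
    prod_congr rfl fun k _ => by congr 1; linear_combination -hu
  have hcol : ∏ j ∈ range m, sinh (W T - U j + P j + R T) =
      ∏ j ∈ range m, sinh (U m - U j + P j + P m) :=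
    prod_congr rfl fun j _ => by congr 1; linear_combination -hu
  have hvanish : ∏ k ∈ range M, sinh (U m + P m - W k - R k) = 0 :=
    prod_eq_zero (mem_range.2 hTM) (by rw [hu]; simp)
  -- both sides become the same monomial in the split products once the right side is
  -- multiplied by the vertical factor that cancels the last row of denominators
  rw [← mul_one (sFelNat m (T + 1) M U P SP v q sq W R SR),
    ← neg_one_pow_mul_prod_sinh_mul_prod_inv v q hu hden]
  simp only [sFelNat, prod_range_succ_prod_Ioo]
  simp only [prod_range_succ, prod_eq_prod_Ico_succ_bot hTM, prod_mul_distrib]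
  rw [hrow, hcol, hvanish, add_zero, hu, prod_range_sinh_split hTM, ← hSR]
  ring

/-- The recursion for the factorized Felderhof scalar product: setting
`u_n + p_n = w_{Ñ+1} + r_{Ñ+1}` (with `Ñ = N - n`, `n = m + 1`) yields
`S_n = [2p_n]^{1/2}[2r_{Ñ+1}]^{1/2} ∏_{j<Ñ+1}[w_j-w_{Ñ+1}+r_j-r_{Ñ+1}+2p_n]
  ∏_{Ñ+1<j≤M}[w_{Ñ+1}-w_j+r_j+r_{Ñ+1}] · S_{n-1}`. -/
theorem sFel_recursion {m N M : ℕ} (hm : m + 1 ≤ N) (hNM : N ≤ M)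
    (u p : Fin (m + 1) → ℂ) (v q : Fin N → ℂ) (w r : Fin M → ℂ)
    (sp : Fin (m + 1) → ℂ) (sq : Fin N → ℂ) (sr : Fin M → ℂ)
    (hsr : ∀ j, (sr j) ^ 2 = Complex.sinh (2 * r j))
    (hden : ∀ (j : Fin (m + 1)) (k : Fin N),
      Complex.sinh (u j + p j - v k - q k) ≠ 0)
    (hu : u (Fin.last m) + p (Fin.last m) =
      w ⟨N - (m + 1), by omega⟩ + r ⟨N - (m + 1), by omega⟩) :
    SFel u p v q w r sp sq sr hm hNM =
      sp (Fin.last m) * sr ⟨N - (m + 1), by omega⟩ *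
        (∏ j ∈ Finset.univ.filter (fun j : Fin M => (j : ℕ) < N - (m + 1)),
          Complex.sinh (w j - w ⟨N - (m + 1), by omega⟩ + r j -
            r ⟨N - (m + 1), by omega⟩ + 2 * p (Fin.last m))) *
        (∏ j ∈ Finset.univ.filter (fun j : Fin M => N - (m + 1) < (j : ℕ)),
          Complex.sinh (w ⟨N - (m + 1), by omega⟩ - w j + r j +
            r ⟨N - (m + 1), by omega⟩)) *
        SFel (u ∘ Fin.castSucc) (p ∘ Fin.castSucc) v q w r
          (sp ∘ Fin.castSucc) sq sr (by omega) hNM := by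
  have hTM : N - (m + 1) < M := by omega
  obtain ⟨U, rfl⟩ := Fin.val_injective.surjective_comp_right u
  obtain ⟨P, rfl⟩ := Fin.val_injective.surjective_comp_right p
  obtain ⟨SP, rfl⟩ := Fin.val_injective.surjective_comp_right sp
  obtain ⟨W, rfl⟩ := Fin.val_injective.surjective_comp_right w
  obtain ⟨R, rfl⟩ := Fin.val_injective.surjective_comp_right r
  obtain ⟨SR, rfl⟩ := Fin.val_injective.surjective_comp_right sr
  have hcast (F : ℕ → ℂ) : (F ∘ Fin.val) ∘ (Fin.castSucc : Fin m → Fin (m + 1)) = F ∘ Fin.val :=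
    rfl
  rw [hcast, hcast, hcast, SFel_eq_sFelNat, SFel_eq_sFelNat, show N - m = N - (m + 1) + 1 by omega,
    sFelNat_succ (m := m) hTM U P SP v q sq W R SR (hsr ⟨_, hTM⟩) (hden (Fin.last m)) hu]
  simp only [Function.comp_apply, Fin.val_last,
    ← prod_univ_filter_val (M := M) (p := (· < N - (m + 1))) (s := range (N - (m + 1)))
      fun k => by simp only [mem_range]; omega,
    ← prod_univ_filter_val (M := M) (p := (N - (m + 1) < ·)) (s := Ico (N - (m + 1) + 1) M)
      fun k => by simp only [mem_Ico]; omega]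
end
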